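/- Let q : ℝ → ℝ^d be twice differentiable and q* : ℝ → ℝ^d be twice differentiable, and define q̃ = q − q*, s = q̇̃ + Λq̃, v = q̇* − Λq̃, where Λ ∈ ℝ^{d×d} is positive definite. Let H : ℝ → ℝ^{d×d} be a differentiable matrix-valued curve with H(t) symmetric positive definite for all t, let C : ℝ → ℝ^{d×d}, g : ℝ → ℝ^d, f_ext : ℝ → ℝ^d, Y : ℝ → ℝ^{d×p} be curves, let a ∈ ℝᵖ be fixed, and let â : ℝ → ℝᵖ be differentiable. Let K ∈ ℝ^{d×d} be positive definite and Γ ∈ ℝ^{p×p} be symmetric positive definite. Assume that for all t: (i) Ḣ(t) − 2C(t) is skew-symmetric; (ii) H(t)v̇(t) + C(t)v(t) + g(t) − f_ext(t) = Y(t)a (linear parameterization); (iii) H(t)q̈(t) + C(t)q̇(t) + g(t) = τ(t) + f_ext(t) with the generalized force τ(t) = Y(t)â(t) − K s(t); and (iv) â̇(t) = −Γ Y(t)ᵀ s(t). Then for all t, d/dt [ ½ s(t)ᵀ H(t) s(t) + ½ (â(t) − a)ᵀ Γ⁻¹ (â(t) − a) ] = − s(t)ᵀ K s(t). -/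

import Mathlib

/-!
Along the trajectory `s = q̇ − v`, so subtracting the linear parameterization (ii) from the
closed-loop dynamics (iii) gives `H ṡ + C s + K s = Y (â − a)`. Since `H` and `Γ⁻¹` are
symmetric, `V̇ = sᵀ H ṡ + ½ sᵀ Ḣ s + (â − a)ᵀ Γ⁻¹ â̇`. Skew-symmetry of `Ḣ − 2C` turns
`½ sᵀ Ḣ s` into `sᵀ C s`, and the adaptation law turns the last term into `−sᵀ Y (â − a)`,
so everything cancels except `−sᵀ K s`.
-/

open Matrix

section Algebra

variable {R n : Type*} [Fintype n]

theorem Matrix.IsSymm.dotProduct_mulVec_comm [CommSemiring R] {A : Matrix n n R} (hA : A.IsSymm)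
    (v w : n → R) : v ⬝ᵥ (A *ᵥ w) = w ⬝ᵥ (A *ᵥ v) := by
  rw [dotProduct_mulVec, ← mulVec_transpose, hA.eq, dotProduct_comm]

theorem dotProduct_mulVec_self_eq_zero_of_transpose_eq_neg [CommRing R] [NoZeroDivisors R]
    [CharZero R] {A : Matrix n n R} (hA : Aᵀ = -A) (x : n → R) : x ⬝ᵥ (A *ᵥ x) = 0 := by
  rw [← CharZero.eq_neg_self_iff]
  conv_lhs => rw [dotProduct_mulVec, ← mulVec_transpose, hA, neg_mulVec, dotProduct_comm]
  rw [dotProduct_neg]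

end Algebra

section Calculus

variable {𝕜 : Type*} [NontriviallyNormedField 𝕜] {m n : Type*} [Fintype n] {t : 𝕜}

theorem HasDerivAt.dotProduct {u w : 𝕜 → n → 𝕜} {u' w' : n → 𝕜}
    (hu : HasDerivAt u u' t) (hw : HasDerivAt w w' t) :
    HasDerivAt (fun x => u x ⬝ᵥ w x) (u' ⬝ᵥ w t + u t ⬝ᵥ w') t := by
  simp only [_root_.dotProduct, ← Finset.sum_add_distrib]
  exact HasDerivAt.fun_sum fun i _ => (hasDerivAt_pi.1 hu i).mul (hasDerivAt_pi.1 hw i)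

theorem HasDerivAt.mulVec {M : 𝕜 → Matrix m n 𝕜} {M' : Matrix m n 𝕜} {w : 𝕜 → n → 𝕜}
    {w' : n → 𝕜} (hM : ∀ i j, HasDerivAt (fun x => M x i j) (M' i j) t)
    (hw : HasDerivAt w w' t) :
    HasDerivAt (fun x => M x *ᵥ w x) (M' *ᵥ w t + M t *ᵥ w') t :=
  hasDerivAt_pi.2 fun i => (hasDerivAt_pi.2 (hM i)).dotProduct hw

theorem HasDerivAt.const_mulVec (A : Matrix m n 𝕜) {w : 𝕜 → n → 𝕜} {w' : n → 𝕜}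
    (hw : HasDerivAt w w' t) : HasDerivAt (fun x => A *ᵥ w x) (A *ᵥ w') t := by
  simpa using HasDerivAt.mulVec (M := fun _ => A) (M' := 0) (fun _ _ => hasDerivAt_const t _) hw

theorem HasDerivAt.dotProduct_mulVec_self {M : 𝕜 → Matrix n n 𝕜} {M' : Matrix n n 𝕜}
    {u : 𝕜 → n → 𝕜} {u' : n → 𝕜} (hu : HasDerivAt u u' t)
    (hM : ∀ i j, HasDerivAt (fun x => M x i j) (M' i j) t) (hMt : (M t).IsSymm) :
    HasDerivAt (fun x => u x ⬝ᵥ (M x *ᵥ u x))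
      (2 * (u t ⬝ᵥ (M t *ᵥ u')) + u t ⬝ᵥ (M' *ᵥ u t)) t := by
  refine (hu.dotProduct (HasDerivAt.mulVec hM hu)).congr_deriv ?_
  rw [dotProduct_add, hMt.dotProduct_mulVec_comm u']
  ring

theorem HasDerivAt.dotProduct_const_mulVec_self {A : Matrix n n 𝕜} {u : 𝕜 → n → 𝕜}
    {u' : n → 𝕜} (hu : HasDerivAt u u' t) (hA : A.IsSymm) :
    HasDerivAt (fun x => u x ⬝ᵥ (A *ᵥ u x)) (2 * (u t ⬝ᵥ (A *ᵥ u'))) t := by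
  simpa using hu.dotProduct_mulVec_self (M := fun _ => A) (M' := 0)
    (fun _ _ => hasDerivAt_const t _) hA

end Calculus

theorem slotine_li_lyapunov_rate_general
    {d p : ℕ}
    -- twice-differentiable trajectory `q` and target `q*`:
    (q qs q' qs' q'' qs'' : ℝ → Fin d → ℝ)
    (hq : ∀ t, HasDerivAt q (q' t) t) (hq' : ∀ t, HasDerivAt q' (q'' t) t)
    (hqs : ∀ t, HasDerivAt qs (qs' t) t) (hqs' : ∀ t, HasDerivAt qs' (qs'' t) t)
    -- gains:
    (Λ K : Matrix (Fin d) (Fin d) ℝ)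
    (Γ : Matrix (Fin p) (Fin p) ℝ) (hΓ : Γ.PosDef)
    -- auxiliary variables `q̃ = q − q*`, `s = q̇̃ + Λq̃`, `v = q̇* − Λq̃` and
    -- their derivatives:
    (qt s v v' : ℝ → Fin d → ℝ)
    (hqt : ∀ t, qt t = q t - qs t)
    (hs : ∀ t, s t = (q' t - qs' t) + Λ *ᵥ qt t)
    (hv : ∀ t, v t = qs' t - Λ *ᵥ qt t)
    (hv' : ∀ t, v' t = qs'' t - Λ *ᵥ (q' t - qs' t))
    -- the dynamics terms evaluated along the trajectory, regarded as curves;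
    -- `H` is differentiable with derivative `H'` and pointwise symmetric
    -- positive definite:
    (H H' C : ℝ → Matrix (Fin d) (Fin d) ℝ)
    (hH : ∀ t i j, HasDerivAt (fun τ => H τ i j) (H' t i j) t)
    (hHpd : ∀ t, (H t).PosDef)
    (g fext : ℝ → Fin d → ℝ) (Y : ℝ → Matrix (Fin d) (Fin p) ℝ)
    (a : Fin p → ℝ) (ahat ahat' : ℝ → Fin p → ℝ)
    (hahat : ∀ t, HasDerivAt ahat (ahat' t) t)
    (τ : ℝ → Fin d → ℝ)
    -- (i) `Ḣ − 2C` is skew-symmetric: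
    (hskew : ∀ t, (H' t - (2 : ℝ) • C t)ᵀ = -(H' t - (2 : ℝ) • C t))
    -- (ii) linear parameterization:
    (hlin : ∀ t, H t *ᵥ v' t + C t *ᵥ v t + g t - fext t = Y t *ᵥ a)
    -- (iii) equations of motion with the commanded generalized force:
    (hτ : ∀ t, τ t = Y t *ᵥ ahat t - K *ᵥ s t)
    (hdyn : ∀ t, H t *ᵥ q'' t + C t *ᵥ q' t + g t = τ t + fext t)
    -- (iv) adaptation law:
    (hadapt : ∀ t, ahat' t = -(Γ *ᵥ ((Y t)ᵀ *ᵥ s t))) :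
    ∀ t, HasDerivAt
      (fun t => (1 / 2) * (s t ⬝ᵥ (H t *ᵥ s t))
        + (1 / 2) * ((ahat t - a) ⬝ᵥ (Γ⁻¹ *ᵥ (ahat t - a))))
      (-(s t ⬝ᵥ (K *ᵥ s t))) t := by
  intro t
  have hs_eq : ∀ t, s t = q' t - v t := fun t => by rw [hs, hv]; abel
  have hv_deriv : HasDerivAt v (v' t) t := by
    have hv_fun : v = fun t => qs' t - Λ *ᵥ (q t - qs t) := funext fun t => by rw [hv, hqt]
    rw [hv_fun, hv' t]
    exact (hqs' t).sub (((hq t).sub (hqs t)).const_mulVec Λ)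
  have hs_deriv : HasDerivAt s (q'' t - v' t) t := by
    rw [funext hs_eq]
    exact (hq' t).sub hv_deriv
  have hV := ((hs_deriv.dotProduct_mulVec_self (hH t)
      (isHermitian_iff_isSymm.1 (hHpd t).isHermitian)).const_mul (1 / 2 : ℝ)).add
    ((((hahat t).sub_const a).dotProduct_const_mulVec_self
      (isHermitian_iff_isSymm.1 hΓ.isHermitian).inv).const_mul (1 / 2 : ℝ))
  refine hV.congr_deriv ?_
  have closed_loop : H t *ᵥ (q'' t - v' t) = Y t *ᵥ (ahat t - a) - K *ᵥ s t - C t *ᵥ s t := by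
    have hCs : C t *ᵥ s t = C t *ᵥ q' t - C t *ᵥ v t := by rw [hs_eq, mulVec_sub]
    rw [mulVec_sub, mulVec_sub]
    linear_combination hdyn t - hlin t + hτ t + hCs
  have passivity : s t ⬝ᵥ (H' t *ᵥ s t) = 2 * (s t ⬝ᵥ (C t *ᵥ s t)) := by
    have h := dotProduct_mulVec_self_eq_zero_of_transpose_eq_neg (hskew t) (s t)
    rw [sub_mulVec, dotProduct_sub, smul_mulVec, dotProduct_smul, smul_eq_mul] at h
    linarith
  have adaptation : (ahat t - a) ⬝ᵥ (Γ⁻¹ *ᵥ ahat' t) = -(s t ⬝ᵥ (Y t *ᵥ (ahat t - a))) := by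
    rw [hadapt t, mulVec_neg, mulVec_mulVec,
      nonsing_inv_mul Γ ((isUnit_iff_isUnit_det Γ).1 hΓ.isUnit), one_mulVec, dotProduct_neg,
      dotProduct_mulVec, vecMul_transpose, dotProduct_comm]
  rw [closed_loop, passivity, adaptation]
  simp only [dotProduct_sub]
  ring

/-- Slotine–Li adaptive control of a fully-actuated Lagrangian
system with linearly parameterized dynamics, stated along a trajectory: the
Lyapunov candidate `V = ½ sᵀHs + ½‖â − a‖²_{Γ⁻¹}` satisfies `V̇ = −sᵀKs`. -/
theorem slotine_li_lyapunov_rate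
    {d p : ℕ}
    -- twice-differentiable trajectory `q` and target `q*`:
    (q qs q' qs' q'' qs'' : ℝ → Fin d → ℝ)
    (hq : ∀ t, HasDerivAt q (q' t) t) (hq' : ∀ t, HasDerivAt q' (q'' t) t)
    (hqs : ∀ t, HasDerivAt qs (qs' t) t) (hqs' : ∀ t, HasDerivAt qs' (qs'' t) t)
    -- gains:
    (Λ K : Matrix (Fin d) (Fin d) ℝ) (hΛ : Λ.PosDef) (hK : K.PosDef)
    (Γ : Matrix (Fin p) (Fin p) ℝ) (hΓ : Γ.PosDef)
    -- auxiliary variables `q̃ = q − q*`, `s = q̇̃ + Λq̃`, `v = q̇* − Λq̃` and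
    -- their derivatives:
    (qt s v v' : ℝ → Fin d → ℝ)
    (hqt : ∀ t, qt t = q t - qs t)
    (hs : ∀ t, s t = (q' t - qs' t) + Λ *ᵥ qt t)
    (hv : ∀ t, v t = qs' t - Λ *ᵥ qt t)
    (hv' : ∀ t, v' t = qs'' t - Λ *ᵥ (q' t - qs' t))
    -- the dynamics terms evaluated along the trajectory, regarded as curves;
    -- `H` is differentiable with derivative `H'` and pointwise symmetric
    -- positive definite:
    (H H' C : ℝ → Matrix (Fin d) (Fin d) ℝ)
    (hH : ∀ t i j, HasDerivAt (fun τ => H τ i j) (H' t i j) t)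
    (hHpd : ∀ t, (H t).PosDef)
    (g fext : ℝ → Fin d → ℝ) (Y : ℝ → Matrix (Fin d) (Fin p) ℝ)
    (a : Fin p → ℝ) (ahat ahat' : ℝ → Fin p → ℝ)
    (hahat : ∀ t, HasDerivAt ahat (ahat' t) t)
    (τ : ℝ → Fin d → ℝ)
    -- (i) `Ḣ − 2C` is skew-symmetric:
    (hskew : ∀ t, (H' t - (2 : ℝ) • C t)ᵀ = -(H' t - (2 : ℝ) • C t))
    -- (ii) linear parameterization:
    (hlin : ∀ t, H t *ᵥ v' t + C t *ᵥ v t + g t - fext t = Y t *ᵥ a)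
    -- (iii) equations of motion with the commanded generalized force:
    (hτ : ∀ t, τ t = Y t *ᵥ ahat t - K *ᵥ s t)
    (hdyn : ∀ t, H t *ᵥ q'' t + C t *ᵥ q' t + g t = τ t + fext t)
    -- (iv) adaptation law:
    (hadapt : ∀ t, ahat' t = -(Γ *ᵥ ((Y t)ᵀ *ᵥ s t))) :
    ∀ t, HasDerivAt
      (fun t => (1 / 2) * (s t ⬝ᵥ (H t *ᵥ s t))
        + (1 / 2) * ((ahat t - a) ⬝ᵥ (Γ⁻¹ *ᵥ (ahat t - a))))
      (-(s t ⬝ᵥ (K *ᵥ s t))) t :=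
  slotine_li_lyapunov_rate_general q qs q' qs' q'' qs'' hq hq' hqs hqs' Λ K Γ hΓ qt s v v' hqt hs hv
    hv' H H' C hH hHpd g fext Y a ahat ahat' hahat τ hskew hlin hτ hdyn hadapt
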